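/- Let X = {x_1,...,x_n} be a finite set of points in an open hemisphere of the sphere S^d that is not k-divisible, i.e., for every partition of X into two sets A, B there exists a k-element subset K ⊆ X with conv(A \ K) ∩ conv(B \ K) = ∅. Then there exists η > 0 such that every set X' = {x_1',...,x_n'} with ‖x_i − x_i'‖ < η for all i is also not k-divisible and lies in the same open hemisphere. -/

import Mathlib

/-!
Two disjoint convex hulls of finite sets are strictly separated by a linear functional, and the
finitely many strict inequalities expressing this survive small perturbations of the points, so
disjointness of the two hulls is an open condition on the configuration. Non-divisibility is a
finite intersection (over partitions) of finite unions (over removed sets `K`) of such conditions,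
and lying in the open hemisphere `{y | 0 < ⟪v, y⟫}` is open as well.
-/

/-- A family of points is `k`-divisible if it can be partitioned (via a sign
function `σ`) into two parts such that, after removing any `k` of the points,
the convex hulls of the two parts still intersect. -/
def KDivisible {d n : ℕ} (k : ℕ) (x : Fin n → EuclideanSpace ℝ (Fin (d + 1))) : Prop :=
  ∃ σ : Fin n → Bool,
    ∀ K : Finset (Fin n), K.card = k →
      ((convexHull ℝ (x '' {i | σ i = true ∧ i ∉ K})) ∩
        (convexHull ℝ (x '' {i | σ i = false ∧ i ∉ K}))).Nonempty

theorem isOpen_setOf_disjoint_convexHull_image {ι E : Type*} [Finite ι] [TopologicalSpace E]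
    [AddCommGroup E] [Module ℝ E] [IsTopologicalAddGroup E] [ContinuousSMul ℝ E]
    [LocallyConvexSpace ℝ E] [T2Space E] (s t : Set ι) :
    IsOpen {x : ι → E | Disjoint (convexHull ℝ (x '' s)) (convexHull ℝ (x '' t))} := by
  refine isOpen_iff_forall_mem_open.2 fun x hx => ?_
  obtain ⟨f, u, w, hfs, huw, hft⟩ := geometric_hahn_banach_compact_closed (convex_convexHull ℝ _)
    ((Set.toFinite _).isCompact_convexHull ℝ) (convex_convexHull ℝ _)
    ((Set.toFinite _).isCompact_convexHull ℝ).isClosed hx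
  refine ⟨(⋂ i ∈ s, {y | f (y i) < u}) ∩ ⋂ i ∈ t, {y | w < f (y i)}, ?_, ?_, ?_⟩
  · rintro y ⟨hys, hyt⟩
    simp only [Set.mem_iInter, Set.mem_ofPred_eq] at hys hyt
    have hs : convexHull ℝ (y '' s) ⊆ f ⁻¹' Set.Iio u :=
      convexHull_min (by rintro _ ⟨i, hi, rfl⟩; exact hys i hi)
        ((convex_Iio u).linear_preimage f.toLinearMap)
    have ht : convexHull ℝ (y '' t) ⊆ f ⁻¹' Set.Ioi w :=
      convexHull_min (by rintro _ ⟨i, hi, rfl⟩; exact hyt i hi)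
        ((convex_Ioi w).linear_preimage f.toLinearMap)
    refine Set.disjoint_of_subset hs ht (Set.disjoint_left.2 fun z hzu hzw => ?_)
    simp only [Set.mem_preimage, Set.mem_Iio, Set.mem_Ioi] at hzu hzw
    linarith
  · refine ((Set.toFinite s).isOpen_biInter fun i _ => ?_).inter
      ((Set.toFinite t).isOpen_biInter fun i _ => ?_)
    · exact isOpen_lt (f.continuous.comp (continuous_apply i)) continuous_const
    · exact isOpen_lt continuous_const (f.continuous.comp (continuous_apply i))
  · simp only [Set.mem_inter_iff, Set.mem_iInter, Set.mem_ofPred_eq]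
    exact ⟨fun i hi => hfs _ (subset_convexHull ℝ _ ⟨i, hi, rfl⟩),
      fun i hi => hft _ (subset_convexHull ℝ _ ⟨i, hi, rfl⟩)⟩

theorem isOpen_setOf_not_kDivisible (d n k : ℕ) :
    IsOpen {x : Fin n → EuclideanSpace ℝ (Fin (d + 1)) | ¬ KDivisible k x} := by
  have hset : {x : Fin n → EuclideanSpace ℝ (Fin (d + 1)) | ¬ KDivisible k x} =
      ⋂ σ : Fin n → Bool, ⋃ K : Finset (Fin n), ⋃ _ : K.card = k,
        {x | Disjoint (convexHull ℝ (x '' {i | σ i = true ∧ i ∉ K}))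
          (convexHull ℝ (x '' {i | σ i = false ∧ i ∉ K}))} := by
    ext x
    simp [KDivisible, Set.disjoint_iff_inter_eq_empty, Set.not_nonempty_iff_eq_empty]
  rw [hset]
  exact isOpen_iInter_of_finite fun σ => isOpen_iUnion fun K => isOpen_iUnion fun _ =>
    isOpen_setOf_disjoint_convexHull_image _ _

theorem stmt1_general {d n k : ℕ} (x : Fin n → EuclideanSpace ℝ (Fin (d + 1)))
    (v : EuclideanSpace ℝ (Fin (d + 1)))
    (hhemi : ∀ i, 0 < (inner ℝ v (x i) : ℝ))
    (hnd : ¬ KDivisible k x) :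
    ∃ η > (0 : ℝ), ∀ x' : Fin n → EuclideanSpace ℝ (Fin (d + 1)),
      (∀ i, ‖x i - x' i‖ < η) →
      ¬ KDivisible k x' ∧ ∀ i, 0 < (inner ℝ v (x' i) : ℝ) := by
  have hhemi_open :
      IsOpen {y : Fin n → EuclideanSpace ℝ (Fin (d + 1)) | ∀ i, 0 < inner ℝ v (y i)} := by
    simp only [Set.ofPred_forall]
    exact isOpen_iInter_of_finite fun i =>
      isOpen_lt continuous_const (continuous_const.inner (continuous_apply i))
  obtain ⟨η, hη, hball⟩ :=
    Metric.isOpen_iff.1 ((isOpen_setOf_not_kDivisible d n k).inter hhemi_open) x ⟨hnd, hhemi⟩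
  refine ⟨η, hη, fun x' hx' => hball ?_⟩
  rw [Metric.mem_ball, dist_pi_lt_iff hη]
  intro i
  rw [dist_eq_norm, norm_sub_rev]
  exact hx' i

/-- Not being `k`-divisible is an open condition for point sets in an open
hemisphere of the sphere `S^d`. -/
theorem stmt1 {d n k : ℕ} (x : Fin n → EuclideanSpace ℝ (Fin (d + 1)))
    (hsphere : ∀ i, ‖x i‖ = 1)
    (v : EuclideanSpace ℝ (Fin (d + 1)))
    (hhemi : ∀ i, 0 < (inner ℝ v (x i) : ℝ))
    (hnd : ¬ KDivisible k x) :
    ∃ η > (0 : ℝ), ∀ x' : Fin n → EuclideanSpace ℝ (Fin (d + 1)),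
      (∀ i, ‖x i - x' i‖ < η) →
      ¬ KDivisible k x' ∧ ∀ i, 0 < (inner ℝ v (x' i) : ℝ) :=
  stmt1_general x v hhemi hnd
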